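/- arXiv:2509.11064 — 8 statements merged into one kernel-verified Lean document; each statement's English description precedes it below -/
import Mathlib

section
/- Let m > 0, v ∈ ℝ³, v⁰ = √(m² + ‖v‖²), v̂ = v/v⁰, and let ω ∈ ℝ³ be a unit vector. Then the norm of the vector (1 − ‖v̂‖²)(v̂ + ω)/(1 + v̂·ω)² is at most 2√(m² + ‖v‖²)/m, i.e. (1 − ‖v̂‖²)·‖v̂ + ω‖/(1 + v̂·ω)² ≤ 2 v⁰/m. -/
/-!
Write `p = 1 - ‖v̂‖²`, `d = 1 + v̂·ω` and `N = ‖v̂ + ω‖`. For a unit vector `ω` one has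
`N² = 2d - p`, and `√p = m / v⁰`, so the claim is `p^{3/2} N ≤ 2 d²`, i.e. after squaring
`p³ (2d - p) ≤ 4 d⁴`. This holds for all real `p, d`, since
`4d⁴ - p³(2d - p) = (p² - dp - d²)² + d²(p - d)² + 2d⁴`.
-/

noncomputable section

local notation "⟪" x ", " y "⟫" => @inner ℝ _ _ x y

theorem pow_three_mul_two_mul_sub_le_four_mul_pow_four (p d : ℝ) :
    p ^ 3 * (2 * d - p) ≤ 4 * d ^ 4 := by
  have h : 4 * d ^ 4 - p ^ 3 * (2 * d - p) =
      (p ^ 2 - d * p - d ^ 2) ^ 2 + (d * (p - d)) ^ 2 + 2 * (d ^ 2) ^ 2 := by ring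
  have : 0 ≤ 4 * d ^ 4 - p ^ 3 * (2 * d - p) := h ▸ by positivity
  linarith

theorem norm_add_sq_of_norm_eq_one {F : Type*} [NormedAddCommGroup F] [InnerProductSpace ℝ F]
    (x : F) {ω : F} (hω : ‖ω‖ = 1) :
    ‖x + ω‖ ^ 2 = 2 * (1 + ⟪x, ω⟫) - (1 - ‖x‖ ^ 2) := by
  rw [norm_add_sq_real, hω]
  ring

theorem one_sub_norm_sq_mul_norm_add_mul_sqrt_le {F : Type*} [NormedAddCommGroup F]
    [InnerProductSpace ℝ F] (x : F) {ω : F} (hω : ‖ω‖ = 1) :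
    (1 - ‖x‖ ^ 2) * ‖x + ω‖ * √(1 - ‖x‖ ^ 2) ≤ 2 * (1 + ⟪x, ω⟫) ^ 2 := by
  set p := 1 - ‖x‖ ^ 2
  set d := 1 + ⟪x, ω⟫
  rcases le_or_gt p 0 with hp | hp
  · rw [Real.sqrt_eq_zero_of_nonpos hp, mul_zero]
    positivity
  · refine le_of_sq_le_sq ?_ (by positivity)
    calc ((p * ‖x + ω‖) * √p) ^ 2 = p ^ 3 * ‖x + ω‖ ^ 2 := by
          rw [mul_pow, Real.sq_sqrt hp.le]; ring
      _ = p ^ 3 * (2 * d - p) := by rw [norm_add_sq_of_norm_eq_one x hω]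
      _ ≤ 4 * d ^ 4 := pow_three_mul_two_mul_sub_le_four_mul_pow_four p d
      _ = (2 * d ^ 2) ^ 2 := by ring

theorem one_sub_norm_sq_inv_sqrt_smul {E : Type*} [NormedAddCommGroup E] [NormedSpace ℝ E]
    {m : ℝ} (hm : m ≠ 0) (v : E) :
    1 - ‖(√(m ^ 2 + ‖v‖ ^ 2))⁻¹ • v‖ ^ 2 = (m / √(m ^ 2 + ‖v‖ ^ 2)) ^ 2 := by
  have hpos : 0 < m ^ 2 + ‖v‖ ^ 2 := by positivity
  have hsq : √(m ^ 2 + ‖v‖ ^ 2) ^ 2 = m ^ 2 + ‖v‖ ^ 2 := Real.sq_sqrt hpos.le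
  have hne : √(m ^ 2 + ‖v‖ ^ 2) ≠ 0 := (Real.sqrt_pos.2 hpos).ne'
  rw [norm_smul, norm_inv, Real.norm_of_nonneg (Real.sqrt_nonneg _)]
  field_simp
  rw [hsq]
  ring

/-- With `v⁰ = √(m² + ‖v‖²)`, `v̂ = v/v⁰` and `ω` a unit vector, the kernel of
the electric-field T-term satisfies `(1 − ‖v̂‖²)·‖v̂ + ω‖/(1 + v̂·ω)² ≤ 2 v⁰/m`. -/
theorem electric_T_kernel_bound
    (m : ℝ) (hm : 0 < m) (v ω : EuclideanSpace ℝ (Fin 3)) (hω : ‖ω‖ = 1)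
    (v0 : ℝ) (hv0 : v0 = Real.sqrt (m ^ 2 + ‖v‖ ^ 2))
    (vhat : EuclideanSpace ℝ (Fin 3)) (hvhat : vhat = v0⁻¹ • v) :
    (1 - ‖vhat‖ ^ 2) * ‖vhat + ω‖ / (1 + ⟪vhat, ω⟫) ^ 2 ≤ 2 * v0 / m := by
  have hv0pos : 0 < v0 := hv0 ▸ Real.sqrt_pos.2 (by positivity)
  have hp : 1 - ‖vhat‖ ^ 2 = (m / v0) ^ 2 := by
    rw [hvhat, hv0]
    exact one_sub_norm_sq_inv_sqrt_smul hm.ne' v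
  have hkernel := one_sub_norm_sq_mul_norm_add_mul_sqrt_le vhat hω
  rw [hp, Real.sqrt_sq (by positivity)] at hkernel
  rw [hp]
  refine div_le_of_le_mul₀ (sq_nonneg _) (by positivity) ?_
  calc (m / v0) ^ 2 * ‖vhat + ω‖
        = (m / v0) ^ 2 * ‖vhat + ω‖ * (m / v0) * (v0 / m) := by field_simp
    _ ≤ 2 * (1 + ⟪vhat, ω⟫) ^ 2 * (v0 / m) := by gcongr
    _ = 2 * v0 / m * (1 + ⟪vhat, ω⟫) ^ 2 := by ring
end
end

section
/- Let m > 0, v ∈ ℝ³, v⁰ = √(m² + ‖v‖²), v̂ = v/v⁰, and let ω ∈ ℝ³ be a unit vector. Then ‖ω × v̂‖/(1 + v̂·ω) ≤ ‖v‖/m; equivalently, m·‖ω × v̂‖ ≤ ‖v‖·(1 + v̂·ω). -/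
/-!
Write `V = ‖v‖`, `C = v·ω` and `N = ‖ω × v‖`, so that `N² = V² - C²` (Lagrange's identity) and
the claim, after multiplying through by `v⁰`, reads `m N ≤ V (v⁰ + C)`. Both sides are nonnegative,
and since `m² = (v⁰)² - V²` the difference of their squares is a perfect square:
`V² (v⁰ + C)² - m² (V² - C²) = (V² + C v⁰)²`.
-/

noncomputable section

local notation "⟪" x ", " y "⟫" => @inner ℝ _ _ x y

noncomputable def cross3 (a b : EuclideanSpace ℝ (Fin 3)) : EuclideanSpace ℝ (Fin 3) :=
  (WithLp.equiv 2 (Fin 3 → ℝ)).symm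
    ![a 1 * b 2 - a 2 * b 1, a 2 * b 0 - a 0 * b 2, a 0 * b 1 - a 1 * b 0]

lemma abs_real_inner_le_norm_of_norm_eq_one {E : Type*} [NormedAddCommGroup E]
    [InnerProductSpace ℝ E] (v : E) {ω : E} (hω : ‖ω‖ = 1) : |⟪v, ω⟫| ≤ ‖v‖ := by
  simpa [hω] using abs_real_inner_le_norm v ω

lemma norm_cross3_sq (a b : EuclideanSpace ℝ (Fin 3)) :
    ‖cross3 a b‖ ^ 2 = ‖a‖ ^ 2 * ‖b‖ ^ 2 - ⟪a, b⟫ ^ 2 := by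
  simp only [← real_inner_self_eq_norm_sq, PiLp.inner_apply, RCLike.inner_apply, conj_trivial,
    Fin.sum_univ_three, cross3, WithLp.equiv_symm_apply, Matrix.cons_val_zero,
    Matrix.cons_val_one, Matrix.cons_val_two, Matrix.head_cons, Matrix.tail_cons]
  ring

lemma cross3_smul_right (a b : EuclideanSpace ℝ (Fin 3)) (c : ℝ) :
    cross3 a (c • b) = c • cross3 a b := by
  ext i
  fin_cases i <;>
    simp only [cross3, Fin.isValue, PiLp.smul_apply, smul_eq_mul, WithLp.equiv_symm_apply,
      Fin.zero_eta, Fin.mk_one, Fin.reduceFinMk, Matrix.cons_val_zero, Matrix.cons_val_one,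
      Matrix.cons_val] <;> ring

lemma mul_norm_cross3_le (m : ℝ) (v ω : EuclideanSpace ℝ (Fin 3)) (hω : ‖ω‖ = 1) :
    m * ‖cross3 ω v‖ ≤ ‖v‖ * (√(m ^ 2 + ‖v‖ ^ 2) + ⟪v, ω⟫) := by
  set v0 := √(m ^ 2 + ‖v‖ ^ 2)
  have hv0_sq : v0 ^ 2 = m ^ 2 + ‖v‖ ^ 2 := Real.sq_sqrt (by positivity)
  have hv0 : ‖v‖ ≤ v0 := (le_abs_self _).trans (Real.abs_le_sqrt (by nlinarith))
  have hC := abs_real_inner_le_norm_of_norm_eq_one v hω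
  have hN_sq : ‖cross3 ω v‖ ^ 2 = ‖v‖ ^ 2 - ⟪v, ω⟫ ^ 2 := by
    rw [norm_cross3_sq, hω, real_inner_comm]; ring
  have hgap : (‖v‖ * (v0 + ⟪v, ω⟫)) ^ 2 - (m * ‖cross3 ω v‖) ^ 2
      = (‖v‖ ^ 2 + ⟪v, ω⟫ * v0) ^ 2 := by
    rw [mul_pow m, hN_sq, show m ^ 2 = v0 ^ 2 - ‖v‖ ^ 2 by linarith]; ring
  have hrhs : 0 ≤ ‖v‖ * (v0 + ⟪v, ω⟫) :=
    mul_nonneg (norm_nonneg v) (by linarith [neg_abs_le ⟪v, ω⟫])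
  exact (le_abs_self _).trans <|
    abs_le_of_sq_le_sq (by nlinarith [sq_nonneg (‖v‖ ^ 2 + ⟪v, ω⟫ * v0)]) hrhs

/-- With `v⁰ = √(m² + ‖v‖²)`, `v̂ = v/v⁰` and `ω` a unit vector,
`‖ω × v̂‖/(1 + v̂·ω) ≤ ‖v‖/m`; equivalently `m·‖ω × v̂‖ ≤ ‖v‖·(1 + v̂·ω)`. -/
theorem cross_kernel_bound
    (m : ℝ) (hm : 0 < m) (v ω : EuclideanSpace ℝ (Fin 3)) (hω : ‖ω‖ = 1)
    (v0 : ℝ) (hv0 : v0 = Real.sqrt (m ^ 2 + ‖v‖ ^ 2))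
    (vhat : EuclideanSpace ℝ (Fin 3)) (hvhat : vhat = v0⁻¹ • v) :
    ‖cross3 ω vhat‖ / (1 + ⟪vhat, ω⟫) ≤ ‖v‖ / m ∧
      m * ‖cross3 ω vhat‖ ≤ ‖v‖ * (1 + ⟪vhat, ω⟫) := by
  have hv : ‖v‖ < v0 := by
    rw [hv0]; exact (Real.lt_sqrt (norm_nonneg v)).2 (lt_add_of_pos_left _ (by positivity))
  have hC := abs_real_inner_le_norm_of_norm_eq_one v hω
  have hv0_pos : 0 < v0 := (norm_nonneg v).trans_lt hv
  have hden : 1 + ⟪vhat, ω⟫ = v0⁻¹ * (v0 + ⟪v, ω⟫) := by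
    rw [hvhat, real_inner_smul_left]; field_simp
  have hden_pos : 0 < 1 + ⟪vhat, ω⟫ := by
    rw [hden]; exact mul_pos (inv_pos.2 hv0_pos) (by linarith [neg_abs_le ⟪v, ω⟫])
  have hnum : ‖cross3 ω vhat‖ = v0⁻¹ * ‖cross3 ω v‖ := by
    rw [hvhat, cross3_smul_right, norm_smul, norm_inv, Real.norm_of_nonneg hv0_pos.le]
  have key : m * ‖cross3 ω vhat‖ ≤ ‖v‖ * (1 + ⟪vhat, ω⟫) := by
    have := mul_le_mul_of_nonneg_left (hv0 ▸ mul_norm_cross3_le m v ω hω)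
      (inv_nonneg.2 hv0_pos.le)
    rw [hnum, hden]; linarith
  exact ⟨(div_le_div_iff₀ hden_pos hm).2 (by linarith), key⟩
end
end

section
/- Let m > 0, v ∈ ℝ³, v⁰ = √(m² + ‖v‖²), v̂ = v/v⁰, and let ω ∈ ℝ³ be a unit vector. Then (1 − ‖v̂‖²)·‖ω × v̂‖/(1 + v̂·ω)² ≤ 2‖v‖/m; in particular it is at most 2√(m² + ‖v‖²)/m. -/
/-!
Write `s = ‖v̂‖` and `c = v̂·ω`. Lagrange's identity gives `‖ω × v̂‖² = s² - c²`, Cauchy–Schwarz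
gives `|c| ≤ s`, and the mass shell gives `‖v‖ = s v⁰` and `(1 - s²) (v⁰)² = m²`. After squaring,
the bound becomes the polynomial inequality `(1 - s²)³ (s² - c²) ≤ 4 s² (1 + c)⁴` for `|c| ≤ s ≤ 1`.
For `s ≤ 1/3` it follows from `s² - c² ≤ s²`, `(1 + s)³ ≤ 4 (1 - s)` and `1 - s ≤ 1 + c`; for
`s ≥ 1/3` from `s - c ≤ 2 s`, `(1 + s)³ ≤ 8 s` and AM-GM applied to `1 + c = (1 - s) + (s + c)`.
-/

noncomputable section

local notation "⟪" x ", " y "⟫" => @inner ℝ _ _ x y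

lemma cross3_eq_toLp_crossProduct (a b : EuclideanSpace ℝ (Fin 3)) :
    cross3 a b = WithLp.toLp 2 (crossProduct a.ofLp b.ofLp) := by
  rw [cross_apply]
  rfl

section KernelBound

variable {s c : ℝ}

lemma kernel_sq_bound_of_le_third (hs : s ≤ 1 / 3) (hcs : |c| ≤ s) :
    (1 - s ^ 2) ^ 3 * (s ^ 2 - c ^ 2) ≤ 4 * s ^ 2 * (1 + c) ^ 4 := by
  obtain ⟨hc_ge, hc_le⟩ := abs_le.1 hcs
  have hs0 : 0 ≤ s := by linarith
  have hcube : (1 + s) ^ 3 ≤ 4 * (1 - s) := by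
    nlinarith [mul_nonneg hs0 (by linarith : (0 : ℝ) ≤ 1 / 3 - s),
      mul_nonneg (mul_nonneg hs0 hs0) (by linarith : (0 : ℝ) ≤ 1 / 3 - s)]
  have hpow : (1 - s) ^ 4 ≤ (1 + c) ^ 4 := pow_le_pow_left₀ (by linarith) (by linarith) 4
  have h1s : 0 ≤ 1 - s := by linarith
  calc (1 - s ^ 2) ^ 3 * (s ^ 2 - c ^ 2)
      ≤ (1 - s) ^ 3 * (1 + s) ^ 3 * s ^ 2 := by
        rw [show (1 - s ^ 2) ^ 3 = (1 - s) ^ 3 * (1 + s) ^ 3 by ring]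
        exact mul_le_mul_of_nonneg_left (by nlinarith) (by positivity)
    _ ≤ (1 - s) ^ 3 * (4 * (1 - s)) * s ^ 2 := by gcongr
    _ = 4 * s ^ 2 * (1 - s) ^ 4 := by ring
    _ ≤ 4 * s ^ 2 * (1 + c) ^ 4 := by gcongr

lemma kernel_sq_bound_of_third_le (hs : 1 / 3 ≤ s) (hs1 : s ≤ 1) (hcs : |c| ≤ s) :
    (1 - s ^ 2) ^ 3 * (s ^ 2 - c ^ 2) ≤ 4 * s ^ 2 * (1 + c) ^ 4 := by
  obtain ⟨hc_ge, hc_le⟩ := abs_le.1 hcs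
  have h1s : 0 ≤ 1 - s := by linarith
  have hsc : 0 ≤ s + c := by linarith
  have hcube : (1 + s) ^ 3 ≤ 8 * s := by
    nlinarith [mul_nonneg h1s (by nlinarith : (0 : ℝ) ≤ s ^ 2 + 4 * s - 1)]
  have hamgm : 4 * (1 - s) * (s + c) ≤ (1 + c) ^ 2 := by nlinarith [sq_nonneg (1 - 2 * s - c)]
  have hsq : (1 - s) ^ 2 ≤ (1 + c) ^ 2 := by gcongr; linarith
  calc (1 - s ^ 2) ^ 3 * (s ^ 2 - c ^ 2)
      = (1 + s) ^ 3 * ((1 - s) ^ 3 * (s + c)) * (s - c) := by ring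
    _ ≤ (8 * s) * ((1 - s) ^ 3 * (s + c)) * (2 * s) := by gcongr; linarith
    _ = 4 * s ^ 2 * ((4 * (1 - s) * (s + c)) * (1 - s) ^ 2) := by ring
    _ ≤ 4 * s ^ 2 * ((1 + c) ^ 2 * (1 + c) ^ 2) := by gcongr
    _ = 4 * s ^ 2 * (1 + c) ^ 4 := by ring

lemma kernel_sq_bound (hs1 : s ≤ 1) (hcs : |c| ≤ s) :
    (1 - s ^ 2) ^ 3 * (s ^ 2 - c ^ 2) ≤ 4 * s ^ 2 * (1 + c) ^ 4 := by
  rcases le_total s (1 / 3) with hs | hs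
  · exact kernel_sq_bound_of_le_third hs hcs
  · exact kernel_sq_bound_of_third_le hs hs1 hcs

lemma kernel_le_of_mass_shell {m v0 N : ℝ} (hm : 0 < m) (hv0 : 0 ≤ v0) (hcs : |c| ≤ s)
    (hN0 : 0 ≤ N) (hN : N ^ 2 = s ^ 2 - c ^ 2) (hmass : (1 - s ^ 2) * v0 ^ 2 = m ^ 2) :
    (1 - s ^ 2) * N / (1 + c) ^ 2 ≤ 2 * (s * v0) / m := by
  have hs0 : 0 ≤ s := (abs_nonneg c).trans hcs
  have h1s : 0 < 1 - s ^ 2 := by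
    by_contra! h
    nlinarith [mul_nonpos_of_nonpos_of_nonneg h (sq_nonneg v0)]
  have hs1 : s ≤ 1 := by nlinarith
  have hc : 0 < 1 + c := by nlinarith [neg_abs_le c]
  rw [div_le_div_iff₀ (by positivity) hm]
  refine (pow_le_pow_iff_left₀ (by positivity) (by positivity) two_ne_zero).1 ?_
  calc ((1 - s ^ 2) * N * m) ^ 2 = (1 - s ^ 2) ^ 3 * (s ^ 2 - c ^ 2) * v0 ^ 2 := by
        rw [mul_pow, mul_pow, hN, ← hmass]
        ring
    _ ≤ 4 * s ^ 2 * (1 + c) ^ 4 * v0 ^ 2 :=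
        mul_le_mul_of_nonneg_right (kernel_sq_bound hs1 hcs) (sq_nonneg v0)
    _ = (2 * (s * v0) * (1 + c) ^ 2) ^ 2 := by ring

end KernelBound

/-- With `v⁰ = √(m² + ‖v‖²)`, `v̂ = v/v⁰` and `ω` a unit vector, the kernel of
the magnetic-field T-term satisfies `(1 − ‖v̂‖²)·‖ω × v̂‖/(1 + v̂·ω)² ≤ 2‖v‖/m`; in
particular it is at most `2√(m² + ‖v‖²)/m`. -/
theorem magnetic_T_kernel_bound
    (m : ℝ) (hm : 0 < m) (v ω : EuclideanSpace ℝ (Fin 3)) (hω : ‖ω‖ = 1)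
    (v0 : ℝ) (hv0 : v0 = Real.sqrt (m ^ 2 + ‖v‖ ^ 2))
    (vhat : EuclideanSpace ℝ (Fin 3)) (hvhat : vhat = v0⁻¹ • v) :
    (1 - ‖vhat‖ ^ 2) * ‖cross3 ω vhat‖ / (1 + ⟪vhat, ω⟫) ^ 2 ≤ 2 * ‖v‖ / m ∧
      (1 - ‖vhat‖ ^ 2) * ‖cross3 ω vhat‖ / (1 + ⟪vhat, ω⟫) ^ 2 ≤
        2 * Real.sqrt (m ^ 2 + ‖v‖ ^ 2) / m := by
  have hv0_pos : 0 < v0 := hv0 ▸ Real.sqrt_pos.2 (by positivity)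
  have hv : ‖vhat‖ * v0 = ‖v‖ := by
    rw [hvhat, norm_smul, norm_inv, Real.norm_of_nonneg hv0_pos.le]
    field_simp
  have hmass : (1 - ‖vhat‖ ^ 2) * v0 ^ 2 = m ^ 2 := by
    rw [sub_mul, ← mul_pow, hv, hv0, Real.sq_sqrt (by positivity)]
    ring
  have hcs : |⟪vhat, ω⟫| ≤ ‖vhat‖ := by simpa [hω] using abs_real_inner_le_norm vhat ω
  have hN : ‖cross3 ω vhat‖ ^ 2 = ‖vhat‖ ^ 2 - ⟪vhat, ω⟫ ^ 2 := by
    rw [norm_cross3_sq, hω, real_inner_comm]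
    ring
  have hbound := kernel_le_of_mass_shell hm hv0_pos.le hcs (norm_nonneg _) hN hmass
  rw [hv] at hbound
  refine ⟨hbound, hbound.trans ?_⟩
  gcongr
  exact Real.le_sqrt_of_sq_le (by nlinarith)
end
end

section
/- Let m > 0, v ∈ ℝ³, v⁰ = √(m² + ‖v‖²), v̂ = v/v⁰, let ω ∈ ℝ³ be a unit vector, and let e₃ = (0,0,1). Then ‖e₃ − (v̂₃/(1 + v̂·ω))·(ω + v̂)‖ ≤ 1 + |v̂₃|·√(m² + ‖v‖²)/m, where v̂₃ is the third component of v̂. -/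
noncomputable section

local notation "⟪" x ", " y "⟫" => @inner ℝ _ _ x y

/-! With `s = v̂·ω` and `a = ‖v̂‖ < 1` one has `‖ω + v̂‖² = 1 + 2s + a²` and
`(1 + s)² - (1 - a²)(1 + 2s + a²) = (s + a²)² ≥ 0`,
so `‖ω + v̂‖ / (1 + v̂·ω) ≤ 1 / √(1 - ‖v̂‖²)`. For the relativistic velocity
`√(1 - ‖v̂‖²) = m / v⁰`, and the bound follows from the triangle inequality. -/

section InnerProductSpace

variable {E : Type*} [NormedAddCommGroup E] [InnerProductSpace ℝ E] {u ω : E}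

theorem one_add_inner_pos (hu : ‖u‖ < 1) (hω : ‖ω‖ = 1) : 0 < 1 + ⟪u, ω⟫ := by
  have := neg_le_of_abs_le (abs_real_inner_le_norm u ω)
  rw [hω, mul_one] at this
  linarith

theorem one_sub_norm_sq_mul_norm_add_sq_le (hω : ‖ω‖ = 1) :
    (1 - ‖u‖ ^ 2) * ‖ω + u‖ ^ 2 ≤ (1 + ⟪u, ω⟫) ^ 2 := by
  have hexpand : ‖ω + u‖ ^ 2 = 1 + 2 * ⟪u, ω⟫ + ‖u‖ ^ 2 := by
    rw [norm_add_sq_real, hω, real_inner_comm]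
    ring
  rw [hexpand]
  nlinarith [sq_nonneg (⟪u, ω⟫ + ‖u‖ ^ 2)]

theorem sqrt_one_sub_norm_sq_mul_norm_add_le (hω : ‖ω‖ = 1) (h : 0 ≤ 1 + ⟪u, ω⟫) :
    √(1 - ‖u‖ ^ 2) * ‖ω + u‖ ≤ 1 + ⟪u, ω⟫ := by
  rw [← Real.sqrt_sq (norm_nonneg (ω + u)), ← Real.sqrt_mul' _ (sq_nonneg _),
    Real.sqrt_le_iff]
  exact ⟨h, one_sub_norm_sq_mul_norm_add_sq_le hω⟩

theorem norm_div_one_add_inner_smul_add_le (hu : ‖u‖ < 1) (hω : ‖ω‖ = 1) (c : ℝ) :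
    ‖(c / (1 + ⟪u, ω⟫)) • (ω + u)‖ ≤ |c| / √(1 - ‖u‖ ^ 2) := by
  have hs := one_add_inner_pos hu hω
  have hroot : 0 < √(1 - ‖u‖ ^ 2) := Real.sqrt_pos.mpr (by nlinarith [norm_nonneg u])
  rw [norm_smul, Real.norm_eq_abs, abs_div, abs_of_pos hs, div_mul_eq_mul_div,
    div_le_div_iff₀ hs hroot, mul_assoc]
  gcongr
  rw [mul_comm]
  exact sqrt_one_sub_norm_sq_mul_norm_add_le hω hs.le

end InnerProductSpace

section RelativisticVelocity

variable {E : Type*} [NormedAddCommGroup E] [NormedSpace ℝ E]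

def relVelocity (m : ℝ) (v : E) : E := (√(m ^ 2 + ‖v‖ ^ 2))⁻¹ • v

variable {m : ℝ} (v : E)

theorem norm_relVelocity (hm : m ≠ 0) :
    ‖relVelocity m v‖ = ‖v‖ / √(m ^ 2 + ‖v‖ ^ 2) := by
  have : 0 < √(m ^ 2 + ‖v‖ ^ 2) := Real.sqrt_pos.mpr (by positivity)
  rw [relVelocity, norm_smul, norm_inv, Real.norm_of_nonneg this.le, inv_mul_eq_div]

theorem norm_relVelocity_lt_one (hm : m ≠ 0) : ‖relVelocity m v‖ < 1 := by
  have hpos : 0 < m ^ 2 + ‖v‖ ^ 2 := by positivity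
  rw [norm_relVelocity v hm, div_lt_one (Real.sqrt_pos.mpr hpos),
    Real.lt_sqrt (norm_nonneg v)]
  linarith [sq_pos_of_ne_zero hm]

theorem sqrt_one_sub_norm_relVelocity_sq (hm : 0 < m) :
    √(1 - ‖relVelocity m v‖ ^ 2) = m / √(m ^ 2 + ‖v‖ ^ 2) := by
  have hpos : 0 < m ^ 2 + ‖v‖ ^ 2 := by positivity
  have hmass : 1 - ‖relVelocity m v‖ ^ 2 = (m / √(m ^ 2 + ‖v‖ ^ 2)) ^ 2 := by
    rw [norm_relVelocity v hm.ne', div_pow, div_pow, Real.sq_sqrt hpos.le]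
    field_simp
    ring
  rw [hmass, Real.sqrt_sq (by positivity)]

end RelativisticVelocity

/-- With `v⁰ = √(m² + ‖v‖²)`, `v̂ = v/v⁰`, `ω` a unit vector and
`e₃ = (0,0,1)`, the kernel of the boundary (b2) contribution satisfies
`‖e₃ − (v̂₃/(1 + v̂·ω))·(ω + v̂)‖ ≤ 1 + |v̂₃|·√(m² + ‖v‖²)/m`. -/
theorem b2_kernel_bound
    (m : ℝ) (hm : 0 < m) (v ω : EuclideanSpace ℝ (Fin 3)) (hω : ‖ω‖ = 1)
    (v0 : ℝ) (hv0 : v0 = Real.sqrt (m ^ 2 + ‖v‖ ^ 2))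
    (vhat : EuclideanSpace ℝ (Fin 3)) (hvhat : vhat = v0⁻¹ • v) :
    ‖EuclideanSpace.single (2 : Fin 3) (1 : ℝ) -
        (vhat 2 / (1 + ⟪vhat, ω⟫)) • (ω + vhat)‖ ≤
      1 + |vhat 2| * Real.sqrt (m ^ 2 + ‖v‖ ^ 2) / m := by
  have hrel : vhat = relVelocity m v := by rw [hvhat, hv0, relVelocity]
  have hnorm : ‖(vhat 2 / (1 + ⟪vhat, ω⟫)) • (ω + vhat)‖ ≤
      |vhat 2| / (m / √(m ^ 2 + ‖v‖ ^ 2)) := by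
    rw [← sqrt_one_sub_norm_relVelocity_sq v hm, ← hrel]
    exact norm_div_one_add_inner_smul_add_le (hrel ▸ norm_relVelocity_lt_one v hm.ne') hω _
  calc _ ≤ ‖EuclideanSpace.single (2 : Fin 3) (1 : ℝ)‖ +
        ‖(vhat 2 / (1 + ⟪vhat, ω⟫)) • (ω + vhat)‖ := norm_sub_le _ _
    _ ≤ 1 + |vhat 2| / (m / √(m ^ 2 + ‖v‖ ^ 2)) := by
        rw [PiLp.norm_single, norm_one]
        gcongr
    _ = 1 + |vhat 2| * √(m ^ 2 + ‖v‖ ^ 2) / m := by rw [div_div_eq_mul_div]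
end
end

section
/- Let m > 0, v ∈ ℝ³, v⁰ = √(m² + ‖v‖²), v̂ = v/v⁰, and let ω ∈ ℝ³ be a unit vector. Then ‖ω − (ω·v̂)v̂‖ ≤ 3(1 + v̂·ω)·√(m² + ‖v‖²)/m; equivalently, ‖ω − (ω·v̂)v̂‖/(1 + v̂·ω) ≤ 3 v⁰/m. -/
/-!
Write `c = ⟪ω, v̂⟫`. Since `‖v̂‖ ≤ 1`, the squared projection `1 - c² (2 - ‖v̂‖²)` is at most
`1 - c² ≤ 2 (1 + c)`. On the other hand `1 + c ≥ 1 - ‖v̂‖ ≥ (1 - ‖v̂‖²) / 2 = m² / (2 v⁰²)`, so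
`1 + c` is never small compared with `m² / v⁰²`, and `2 (1 + c) ≤ (3 (1 + c) v⁰ / m)²` follows.
-/

noncomputable section

local notation "⟪" x ", " y "⟫" => @inner ℝ _ _ x y

section InnerProductSpace

variable {E : Type*} [NormedAddCommGroup E] [InnerProductSpace ℝ E] {ω u : E}

theorem norm_sub_inner_smul_sq_le (hω : ‖ω‖ = 1) (hu : ‖u‖ ≤ 1) :
    ‖ω - ⟪ω, u⟫ • u‖ ^ 2 ≤ 2 * (1 + ⟪u, ω⟫) := by
  have expand : ‖ω - ⟪ω, u⟫ • u‖ ^ 2 = 1 - ⟪ω, u⟫ ^ 2 * (2 - ‖u‖ ^ 2) := by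
    rw [norm_sub_sq_real, real_inner_smul_right, norm_smul, Real.norm_eq_abs, hω, mul_pow, sq_abs]
    ring
  have hu2 : 0 ≤ 1 - ‖u‖ ^ 2 := by nlinarith [norm_nonneg u]
  rw [expand, real_inner_comm ω u]
  nlinarith [mul_nonneg (sq_nonneg ⟪ω, u⟫) hu2, sq_nonneg (1 + ⟪ω, u⟫)]

theorem one_sub_norm_le_one_add_inner (hω : ‖ω‖ = 1) (u : E) : 1 - ‖u‖ ≤ 1 + ⟪u, ω⟫ := by
  have := neg_le_of_abs_le (abs_real_inner_le_norm u ω)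
  rw [hω, mul_one] at this
  linarith

end InnerProductSpace

theorem sq_div_two_le_one_sub_norm_inv_sqrt_smul {F : Type*} [SeminormedAddCommGroup F]
    [NormedSpace ℝ F] {m : ℝ} (hm : m ≠ 0) (v : F) :
    m ^ 2 / (2 * (m ^ 2 + ‖v‖ ^ 2)) ≤ 1 - ‖(√(m ^ 2 + ‖v‖ ^ 2))⁻¹ • v‖ := by
  have hs : 0 < m ^ 2 + ‖v‖ ^ 2 := by positivity
  set x := ‖(√(m ^ 2 + ‖v‖ ^ 2))⁻¹ • v‖ with hx_def
  have hx0 : 0 ≤ x := norm_nonneg _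
  have one_sub_sq : 1 - x ^ 2 = m ^ 2 / (m ^ 2 + ‖v‖ ^ 2) := by
    rw [hx_def, norm_smul, norm_inv, Real.norm_of_nonneg (Real.sqrt_nonneg _), mul_pow, inv_pow,
      Real.sq_sqrt hs.le]
    field_simp
    ring
  have hx1 : x ≤ 1 := by
    have : 0 ≤ 1 - x ^ 2 := one_sub_sq ▸ by positivity
    nlinarith
  calc m ^ 2 / (2 * (m ^ 2 + ‖v‖ ^ 2)) = (1 - x) * (1 + x) / 2 := by
        rw [mul_comm 2, ← div_div, ← one_sub_sq]; ring
    _ ≤ 1 - x := by nlinarith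

theorem le_three_mul_mul_sqrt_div {m s t p : ℝ} (hm : 0 < m) (hs : 0 < s) (hp : p ^ 2 ≤ 2 * t)
    (ht : m ^ 2 / (2 * s) ≤ t) : p ≤ 3 * t * √s / m := by
  have ht' : m ^ 2 ≤ 2 * s * t := (div_le_iff₀' (by positivity)).mp ht
  have htpos : 0 < t := lt_of_lt_of_le (by positivity) ht
  apply le_of_pow_le_pow_left₀ two_ne_zero (by positivity)
  rw [div_pow, mul_pow, Real.sq_sqrt hs.le, le_div_iff₀ (by positivity)]
  nlinarith [mul_le_mul_of_nonneg_left ht' (by positivity : (0 : ℝ) ≤ 9 * t / 2)]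

/-- With `v⁰ = √(m² + ‖v‖²)`, `v̂ = v/v⁰` and `ω` a unit vector, the
projection of `ω` off the `v̂` direction satisfies
`‖ω − (ω·v̂)v̂‖ ≤ 3(1 + v̂·ω)·√(m² + ‖v‖²)/m`; equivalently
`‖ω − (ω·v̂)v̂‖/(1 + v̂·ω) ≤ 3 v⁰/m`. -/
theorem projection_kernel_bound
    (m : ℝ) (hm : 0 < m) (v ω : EuclideanSpace ℝ (Fin 3)) (hω : ‖ω‖ = 1)
    (v0 : ℝ) (hv0 : v0 = Real.sqrt (m ^ 2 + ‖v‖ ^ 2))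
    (vhat : EuclideanSpace ℝ (Fin 3)) (hvhat : vhat = v0⁻¹ • v) :
    ‖ω - ⟪ω, vhat⟫ • vhat‖ ≤ 3 * (1 + ⟪vhat, ω⟫) * Real.sqrt (m ^ 2 + ‖v‖ ^ 2) / m ∧
      ‖ω - ⟪ω, vhat⟫ • vhat‖ / (1 + ⟪vhat, ω⟫) ≤ 3 * v0 / m := by
  subst hv0 hvhat
  have hgap := sq_div_two_le_one_sub_norm_inv_sqrt_smul hm.ne' v
  have hlower := hgap.trans (one_sub_norm_le_one_add_inner hω _)
  have hvhat_le : ‖(√(m ^ 2 + ‖v‖ ^ 2))⁻¹ • v‖ ≤ 1 := by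
    linarith [show 0 ≤ m ^ 2 / (2 * (m ^ 2 + ‖v‖ ^ 2)) by positivity]
  have key := le_three_mul_mul_sqrt_div hm (by positivity) (norm_sub_inner_smul_sq_le hω hvhat_le)
    hlower
  refine ⟨key, ?_⟩
  rw [div_le_iff₀ (lt_of_lt_of_le (by positivity) hlower)]
  exact key.trans_eq (by ring)
end
end

section
/- Let m > 0, v ∈ ℝ³, v⁰ = √(m² + ‖v‖²), v̂ = v/v⁰, let ω ∈ ℝ³ be a unit vector, and fix i ∈ {1,2,3} with standard basis vector eᵢ. Then ‖(eᵢ − v̂ᵢ v̂)/(v⁰(1 + v̂·ω))‖ ≤ 4√(m² + ‖v‖²)/m². -/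
/-!
Since `v⁰ (1 + v̂·ω) = v⁰ + v·ω ≥ v⁰ - ‖v‖ = m² / (v⁰ + ‖v‖) ≥ m² / (2 v⁰)`, the denominator is
at least `m² / (2 v⁰)`, while the numerator `eᵢ - v̂ᵢ v̂` has norm at most `1 + |v̂ᵢ| ‖v̂‖ ≤ 2`.
-/

noncomputable section

local notation "⟪" x ", " y "⟫" => @inner ℝ _ _ x y

section InnerProductSpace

variable {E : Type*} [NormedAddCommGroup E] [InnerProductSpace ℝ E]

theorem norm_sub_inner_smul_le_two {e u : E} (he : ‖e‖ = 1) (hu : ‖u‖ ≤ 1) :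
    ‖e - ⟪e, u⟫ • u‖ ≤ 2 := by
  have hinner : |⟪e, u⟫| ≤ 1 :=
    (abs_real_inner_le_norm e u).trans (by rw [he, one_mul]; exact hu)
  calc ‖e - ⟪e, u⟫ • u‖ ≤ ‖e‖ + |⟪e, u⟫| * ‖u‖ := by
        simpa [norm_smul] using norm_sub_le e (⟪e, u⟫ • u)
    _ ≤ 1 + 1 * 1 := by
        rw [he]; gcongr
    _ = 2 := by norm_num

theorem norm_inv_sqrt_smul_le_one (m : ℝ) (v : E) :
    ‖(Real.sqrt (m ^ 2 + ‖v‖ ^ 2))⁻¹ • v‖ ≤ 1 := by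
  rw [norm_smul, norm_inv, Real.norm_of_nonneg (Real.sqrt_nonneg _), ← div_eq_inv_mul]
  exact div_le_one_of_le₀ (Real.le_sqrt_of_sq_le (le_add_of_nonneg_left (sq_nonneg m)))
    (Real.sqrt_nonneg _)

theorem sq_div_two_sqrt_le_sqrt_add_inner (m : ℝ) (v : E) {ω : E} (hω : ‖ω‖ ≤ 1) :
    m ^ 2 / (2 * Real.sqrt (m ^ 2 + ‖v‖ ^ 2)) ≤ Real.sqrt (m ^ 2 + ‖v‖ ^ 2) + ⟪v, ω⟫ := by
  set v0 := Real.sqrt (m ^ 2 + ‖v‖ ^ 2)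
  have hv0sq : v0 ^ 2 = m ^ 2 + ‖v‖ ^ 2 := Real.sq_sqrt (by positivity)
  have hv_le : ‖v‖ ≤ v0 := Real.le_sqrt_of_sq_le (by nlinarith)
  have hinner : -‖v‖ ≤ ⟪v, ω⟫ := by
    have := (abs_real_inner_le_norm v ω).trans (mul_le_of_le_one_right (norm_nonneg v) hω)
    linarith [neg_abs_le ⟪v, ω⟫]
  have hgap : m ^ 2 / (2 * v0) ≤ v0 - ‖v‖ :=
    div_le_of_le_mul₀ (by positivity) (by linarith) (by nlinarith [norm_nonneg v])
  linarith

end InnerProductSpace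

/-- With `v⁰ = √(m² + ‖v‖²)`, `v̂ = v/v⁰`, `ω` a unit vector and `eᵢ` a
standard basis vector, the first piece `a⁽¹⁾ = (eᵢ − v̂ᵢ v̂)/(v⁰(1 + v̂·ω))` of the
velocity gradient of the Glassey–Strauss electric kernel satisfies
`‖a⁽¹⁾‖ ≤ 4√(m² + ‖v‖²)/m²`. -/
theorem aE_first_piece_bound
    (m : ℝ) (hm : 0 < m) (v ω : EuclideanSpace ℝ (Fin 3)) (hω : ‖ω‖ = 1)
    (v0 : ℝ) (hv0 : v0 = Real.sqrt (m ^ 2 + ‖v‖ ^ 2))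
    (vhat : EuclideanSpace ℝ (Fin 3)) (hvhat : vhat = v0⁻¹ • v) (i : Fin 3) :
    ‖(v0 * (1 + ⟪vhat, ω⟫))⁻¹ •
        (EuclideanSpace.single i (1 : ℝ) - vhat i • vhat)‖ ≤
      4 * Real.sqrt (m ^ 2 + ‖v‖ ^ 2) / m ^ 2 := by
  have hv0_pos : 0 < v0 := hv0 ▸ Real.sqrt_pos.2 (by positivity)
  have hden : v0 * (1 + ⟪vhat, ω⟫) = v0 + ⟪v, ω⟫ := by
    rw [hvhat, real_inner_smul_left]; field_simp
  have hlow : m ^ 2 / (2 * v0) ≤ v0 + ⟪v, ω⟫ := hv0 ▸ sq_div_two_sqrt_le_sqrt_add_inner m v hω.le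
  have hnum : ‖EuclideanSpace.single i (1 : ℝ) - vhat i • vhat‖ ≤ 2 := by
    have hcoord : ⟪EuclideanSpace.single i (1 : ℝ), vhat⟫ = vhat i := by
      simp [EuclideanSpace.inner_single_left]
    have hvhat_le : ‖vhat‖ ≤ 1 := hvhat ▸ hv0 ▸ norm_inv_sqrt_smul_le_one m v
    have he : ‖EuclideanSpace.single i (1 : ℝ)‖ = 1 := by simp
    simpa only [hcoord] using norm_sub_inner_smul_le_two he hvhat_le
  rw [hden, norm_smul, norm_inv, Real.norm_of_nonneg (hlow.trans' (by positivity)), ← hv0]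
  calc (v0 + ⟪v, ω⟫)⁻¹ * ‖EuclideanSpace.single i (1 : ℝ) - vhat i • vhat‖
      ≤ (m ^ 2 / (2 * v0))⁻¹ * 2 := by gcongr
    _ = 4 * v0 / m ^ 2 := by field_simp; ring
end
end

section
/- Let m, g > 0, σ ∈ {+1, −1}, e₃ = (0,0,1), and let a ≤ 0 ≤ b. Let X, V : [a,b] → ℝ³ be differentiable with X'(s) = V̂(s) := V(s)/√(m² + ‖V(s)‖²) and V'(s) = σ(E(s) + V̂(s) × B(s)) − m g e₃ for all s ∈ [a,b], where E, B : [a,b] → ℝ³ satisfy ‖E(s)‖ ≤ m g/8 and ‖B(s)‖ ≤ m g/8 for all s. If X₃(a) = X₃(b) = 0 and X₃(s) ≥ 0 for all s ∈ [a,b], then b − a ≤ (16/(5 m g))·(√(m² + ‖V(0)‖²) + m g·X₃(0)). -/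
/-!
The energy `H = √(m² + ‖V‖²) + m g X₃` changes only through the electric field, at rate
`σ V̂ ⬝ E`, so by at most `m g / 8` per unit time: the magnetic force `V̂ × B` is orthogonal to `V̂`
and the work of gravity is absorbed by the potential `m g X₃`. The vertical momentum satisfies
`V₃' = -m g + O(m g / 4)`, so over `[a, b]` it drops by at least `(3/4) m g (b - a)`. Where the
particle touches the ground `X₃ = 0`, hence `|V₃| ≤ H`; thus
`(3/4) m g (b - a) ≤ V₃(a) - V₃(b) ≤ H(a) + H(b) ≤ 2 H(0) + (m g / 8)(b - a)`.
-/

noncomputable section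

local notation "⟪" x ", " y "⟫" => @inner ℝ _ _ x y

open Set Matrix

lemma abs_sub_le_of_abs_hasDerivWithinAt_le {f f' : ℝ → ℝ} {a b C x y : ℝ}
    (hf : ∀ s ∈ Icc a b, HasDerivWithinAt f (f' s) (Icc a b) s)
    (hC : ∀ s ∈ Icc a b, |f' s| ≤ C) (hx : x ∈ Icc a b) (hy : y ∈ Icc a b) :
    |f y - f x| ≤ C * |y - x| := by
  simpa only [Real.norm_eq_abs] using
    (convex_Icc a b).norm_image_sub_le_of_norm_hasDerivWithin_le hf hC hx hy

/-- `H` is an energy bounding `w a` and `-w b` and drifting at rate at most `ε`, while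
`w` decreases at rate `k` up to an error `δ`. -/
lemma sub_sub_mul_sub_le_two_mul_of_abs_deriv_le {H H' w w' : ℝ → ℝ} {a b k δ ε : ℝ}
    (ha : a ≤ 0) (hb : 0 ≤ b)
    (hH : ∀ s ∈ Icc a b, HasDerivWithinAt H (H' s) (Icc a b) s)
    (hH' : ∀ s ∈ Icc a b, |H' s| ≤ ε)
    (hw : ∀ s ∈ Icc a b, HasDerivWithinAt (fun t => w t + k * t) (w' s) (Icc a b) s)
    (hw' : ∀ s ∈ Icc a b, |w' s| ≤ δ)
    (hwa : w a ≤ H a) (hwb : -w b ≤ H b) :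
    (k - δ - ε) * (b - a) ≤ 2 * H 0 := by
  have h0 : (0 : ℝ) ∈ Icc a b := ⟨ha, hb⟩
  have haI : a ∈ Icc a b := ⟨le_rfl, ha.trans hb⟩
  have hbI : b ∈ Icc a b := ⟨ha.trans hb, le_rfl⟩
  have hHa := (abs_le.mp (abs_sub_le_of_abs_hasDerivWithinAt_le hH hH' haI h0)).1
  have hHb := (abs_le.mp (abs_sub_le_of_abs_hasDerivWithinAt_le hH hH' h0 hbI)).2
  have hwab := (abs_le.mp (abs_sub_le_of_abs_hasDerivWithinAt_le hw hw' haI hbI)).2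
  rw [zero_sub, abs_neg, abs_of_nonpos ha] at hHa
  rw [sub_zero, abs_of_nonneg hb] at hHb
  rw [abs_of_nonneg (sub_nonneg.mpr (ha.trans hb))] at hwab
  linarith

lemma cross3_eq_toLp_crossProduct_s16 (u w : EuclideanSpace ℝ (Fin 3)) :
    cross3 u w = WithLp.toLp 2 (u.ofLp ⨯₃ w.ofLp) := by
  ext i
  fin_cases i <;> simp [cross3, cross_apply]

lemma inner_self_cross3 (u w : EuclideanSpace ℝ (Fin 3)) : ⟪u, cross3 u w⟫ = 0 := by
  rw [cross3_eq_toLp_crossProduct_s16, EuclideanSpace.inner_eq_star_dotProduct,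
    WithLp.ofLp_toLp, star_trivial, dotProduct_comm, dot_self_cross]

lemma norm_cross3_le (u w : EuclideanSpace ℝ (Fin 3)) : ‖cross3 u w‖ ≤ ‖u‖ * ‖w‖ := by
  rw [cross3_eq_toLp_crossProduct_s16, InnerProductGeometry.norm_ofLp_crossProduct]
  exact mul_le_of_le_one_right (by positivity) (Real.sin_le_one _)

section RelativisticVelocity

variable {F : Type*} [NormedAddCommGroup F] [InnerProductSpace ℝ F]

def relVel (m : ℝ) (v : F) : F := (√(m ^ 2 + ‖v‖ ^ 2))⁻¹ • v

lemma norm_relVel_le_one (m : ℝ) (v : F) : ‖relVel m v‖ ≤ 1 := by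
  rw [relVel, norm_smul, norm_inv, Real.norm_of_nonneg (Real.sqrt_nonneg _)]
  refine inv_mul_le_one_of_le₀ ?_ (Real.sqrt_nonneg _)
  exact Real.le_sqrt_of_sq_le (le_add_of_nonneg_left (sq_nonneg m))

lemma HasDerivWithinAt.sqrt_sq_add_norm_sq {m : ℝ} (hm : m ≠ 0) {V : ℝ → F} {V' : F}
    {s : Set ℝ} {x : ℝ} (hV : HasDerivWithinAt V V' s x) :
    HasDerivWithinAt (fun t => √(m ^ 2 + ‖V t‖ ^ 2)) ⟪relVel m (V x), V'⟫ s x := by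
  have hpos : 0 < m ^ 2 + ‖V x‖ ^ 2 := by positivity
  have hsq := (hV.norm_sq).const_add (m ^ 2)
  convert hsq.sqrt hpos.ne' using 1
  rw [relVel, real_inner_smul_left, real_inner_comm]
  field_simp

lemma abs_inner_relVel_le (m : ℝ) (v w : F) : |⟪relVel m v, w⟫| ≤ ‖w‖ :=
  (abs_real_inner_le_norm _ _).trans
    (mul_le_of_le_one_left (norm_nonneg w) (norm_relVel_le_one m v))

end RelativisticVelocity

lemma norm_add_cross3_relVel_le (m : ℝ) (v E B : EuclideanSpace ℝ (Fin 3)) :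
    ‖E + cross3 (relVel m v) B‖ ≤ ‖E‖ + ‖B‖ := by
  refine (norm_add_le _ _).trans (add_le_add_right ?_ _)
  exact (norm_cross3_le _ _).trans
    (mul_le_of_le_one_left (norm_nonneg B) (norm_relVel_le_one m v))

lemma abs_apply_le_sqrt_sq_add_norm_sq {ι : Type*} [Fintype ι] (m : ℝ)
    (v : EuclideanSpace ℝ ι) (i : ι) : |v i| ≤ √(m ^ 2 + ‖v‖ ^ 2) :=
  (PiLp.norm_apply_le v i).trans (Real.le_sqrt_of_sq_le (le_add_of_nonneg_left (sq_nonneg m)))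

lemma HasDerivWithinAt.euclideanSpace_apply {ι : Type*} [Fintype ι]
    {f : ℝ → EuclideanSpace ℝ ι} {f' : EuclideanSpace ℝ ι} {s : Set ℝ} {x : ℝ}
    (hf : HasDerivWithinAt f f' s x) (i : ι) : HasDerivWithinAt (fun t => f t i) (f' i) s x :=
  (EuclideanSpace.proj (𝕜 := ℝ) i).hasFDerivAt.comp_hasDerivWithinAt x hf

section Characteristics

variable {m g σ : ℝ} {X V : ℝ → EuclideanSpace ℝ (Fin 3)} {E B : EuclideanSpace ℝ (Fin 3)}
  {s : Set ℝ} {x : ℝ}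

local notation "e₃" => EuclideanSpace.single (2 : Fin 3) (1 : ℝ)

lemma hasDerivWithinAt_energy (hm : m ≠ 0) (hX : HasDerivWithinAt X (relVel m (V x)) s x)
    (hV : HasDerivWithinAt V (σ • (E + cross3 (relVel m (V x)) B) - (m * g) • e₃) s x) :
    HasDerivWithinAt (fun t => √(m ^ 2 + ‖V t‖ ^ 2) + m * g * X t 2)
      (σ * ⟪relVel m (V x), E⟫) s x := by
  refine ((hV.sqrt_sq_add_norm_sq hm).add
    ((hX.euclideanSpace_apply 2).const_mul (m * g))).congr_deriv ?_
  simp [inner_sub_right, inner_add_right, real_inner_smul_right, inner_self_cross3,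
    EuclideanSpace.inner_single_right]

lemma hasDerivWithinAt_vertical_momentum {F : EuclideanSpace ℝ (Fin 3)}
    (hV : HasDerivWithinAt V (σ • F - (m * g) • e₃) s x) :
    HasDerivWithinAt (fun t => V t 2 + m * g * t) (σ * F 2) s x := by
  refine ((hV.euclideanSpace_apply 2).add
    ((hasDerivWithinAt_id x s).const_mul (m * g))).congr_deriv ?_
  simp

end Characteristics

theorem travel_time_bound_general
    (m g σ : ℝ) (hm : 0 < m) (hg : 0 < g) (hσ : σ = 1 ∨ σ = -1)
    (a b : ℝ) (ha : a ≤ 0) (hb : 0 ≤ b)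
    (X V E B : ℝ → EuclideanSpace ℝ (Fin 3))
    (hX : ∀ s ∈ Set.Icc a b,
      HasDerivWithinAt X ((Real.sqrt (m ^ 2 + ‖V s‖ ^ 2))⁻¹ • V s) (Set.Icc a b) s)
    (hV : ∀ s ∈ Set.Icc a b,
      HasDerivWithinAt V
        (σ • (E s + cross3 ((Real.sqrt (m ^ 2 + ‖V s‖ ^ 2))⁻¹ • V s) (B s)) -
          (m * g) • EuclideanSpace.single (2 : Fin 3) (1 : ℝ))
        (Set.Icc a b) s)
    (hE : ∀ s ∈ Set.Icc a b, ‖E s‖ ≤ m * g / 8)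
    (hB : ∀ s ∈ Set.Icc a b, ‖B s‖ ≤ m * g / 8)
    (hXa : X a 2 = 0) (hXb : X b 2 = 0) :
    b - a ≤ 16 / (5 * m * g) * (Real.sqrt (m ^ 2 + ‖V 0‖ ^ 2) + m * g * X 0 2) := by
  have hσ : |σ| = 1 := by rcases hσ with rfl | rfl <;> norm_num
  have key := sub_sub_mul_sub_le_two_mul_of_abs_deriv_le (k := m * g) (δ := m * g / 4) ha hb
    (fun s hs => hasDerivWithinAt_energy hm.ne' (hX s hs) (hV s hs))
    (fun s hs => by
      rw [abs_mul, hσ, one_mul]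
      exact (abs_inner_relVel_le _ _ _).trans (hE s hs))
    (fun s hs => hasDerivWithinAt_vertical_momentum (hV s hs))
    (fun s hs => by
      rw [abs_mul, hσ, one_mul, ← Real.norm_eq_abs]
      calc _ ≤ _ := PiLp.norm_apply_le _ 2
        _ ≤ ‖E s‖ + ‖B s‖ := norm_add_cross3_relVel_le m (V s) (E s) (B s)
        _ ≤ m * g / 4 := by linarith [hE s hs, hB s hs])
    (by simpa [hXa] using (le_abs_self _).trans (abs_apply_le_sqrt_sq_add_norm_sq m (V a) 2))
    (by simpa [hXb] using (neg_le_abs _).trans (abs_apply_le_sqrt_sq_add_norm_sq m (V b) 2))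
  rw [div_mul_eq_mul_div, le_div_iff₀ (by positivity)]
  linarith

/-- Travel-time bound.  Along relativistic characteristics with gravity
(`X' = V̂`, `V' = σ(E + V̂ × B) − m g e₃` on `[a,b]`, `a ≤ 0 ≤ b`), with field bounds
`‖E‖, ‖B‖ ≤ m g/8`, if `X₃(a) = X₃(b) = 0` and `X₃ ≥ 0` on `[a,b]`, then
`b − a ≤ (16/(5 m g))·(√(m² + ‖V(0)‖²) + m g X₃(0))`. -/
theorem travel_time_bound
    (m g σ : ℝ) (hm : 0 < m) (hg : 0 < g) (hσ : σ = 1 ∨ σ = -1)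
    (a b : ℝ) (ha : a ≤ 0) (hb : 0 ≤ b)
    (X V E B : ℝ → EuclideanSpace ℝ (Fin 3))
    (hX : ∀ s ∈ Set.Icc a b,
      HasDerivWithinAt X ((Real.sqrt (m ^ 2 + ‖V s‖ ^ 2))⁻¹ • V s) (Set.Icc a b) s)
    (hV : ∀ s ∈ Set.Icc a b,
      HasDerivWithinAt V
        (σ • (E s + cross3 ((Real.sqrt (m ^ 2 + ‖V s‖ ^ 2))⁻¹ • V s) (B s)) -
          (m * g) • EuclideanSpace.single (2 : Fin 3) (1 : ℝ))
        (Set.Icc a b) s)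
    (hE : ∀ s ∈ Set.Icc a b, ‖E s‖ ≤ m * g / 8)
    (hB : ∀ s ∈ Set.Icc a b, ‖B s‖ ≤ m * g / 8)
    (hXa : X a 2 = 0) (hXb : X b 2 = 0)
    (hX3 : ∀ s ∈ Set.Icc a b, 0 ≤ X s 2) :
    b - a ≤ 16 / (5 * m * g) * (Real.sqrt (m ^ 2 + ‖V 0‖ ^ 2) + m * g * X 0 2) :=
  travel_time_bound_general m g σ hm hg hσ a b ha hb X V E B hX hV hE hB hXa hXb
end
end

section
/- Let K ≥ 0 and let a : ℝ → ℝ be differentiable with a(s) ≥ 0 and |a'(s)| ≤ K·a(s) for all s ∈ ℝ. Define ã(s) = √(a(s)/(1 + a(s))). Then for all s, t ∈ ℝ: e^{−(K/2)|t−s|}·ã(t) ≤ ã(s) ≤ e^{(K/2)|t−s|}·ã(t). -/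
/-!
If `|a'| ≤ K a` then `a e^{Kx}` is nondecreasing and `a e^{-Kx}` nonincreasing, so
`a(s) ≤ e^{K|s-t|} a(t)`. Since `x ↦ x/(1+x)` is increasing and `L y/(1+L y) ≤ L y/(1+y)` for
`L ≥ 1`, the same bound passes to `a/(1+a)`, and taking square roots halves the rate.
-/

open Real

theorem le_exp_mul_sub_mul_of_mul_le_deriv {f f' : ℝ → ℝ} {c : ℝ}
    (hf : ∀ x, HasDerivAt f (f' x) x) (hc : ∀ x, c * f x ≤ f' x) {s t : ℝ} (hst : s ≤ t) :
    f s ≤ exp (c * (s - t)) * f t := by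
  have hmono : Monotone fun x => f x * exp (-c * x) := by
    refine monotone_of_hasDerivAt_nonneg
      (fun x => (hf x).mul (((hasDerivAt_id x).const_mul (-c)).exp)) fun x => ?_
    simp only [Pi.zero_apply, id, mul_one]
    nlinarith [mul_nonneg (sub_nonneg.mpr (hc x)) (exp_pos (-c * x)).le]
  have h := mul_le_mul_of_nonneg_right (hmono hst) (exp_pos (c * s)).le
  calc f s = f s * exp (-c * s) * exp (c * s) := by rw [mul_assoc, ← exp_add]; simp
    _ ≤ f t * exp (-c * t) * exp (c * s) := h
    _ = exp (c * (s - t)) * f t := by rw [mul_assoc, ← exp_add]; ring_nf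

theorem le_exp_mul_abs_sub_mul_of_abs_deriv_le {f f' : ℝ → ℝ} {K : ℝ}
    (hf : ∀ x, HasDerivAt f (f' x) x) (hK : ∀ x, |f' x| ≤ K * f x) (s t : ℝ) :
    f s ≤ exp (K * |s - t|) * f t := by
  rcases le_total s t with hst | hts
  · have hc : ∀ x, -K * f x ≤ f' x := fun x => by linarith [neg_abs_le (f' x), hK x]
    rw [abs_of_nonpos (sub_nonpos.mpr hst), mul_neg, ← neg_mul]
    exact le_exp_mul_sub_mul_of_mul_le_deriv hf hc hst
  · have hc : ∀ x, K * -f x ≤ -f' x := fun x => by linarith [le_abs_self (f' x), hK x]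
    have h := le_exp_mul_sub_mul_of_mul_le_deriv (fun x => (hf x).neg) hc hts
    rw [abs_of_nonneg (sub_nonneg.mpr hts)]
    simp only [Pi.neg_apply, mul_neg, neg_le_neg_iff] at h
    calc f s = exp (K * (s - t)) * (exp (K * (t - s)) * f s) := by
          rw [← mul_assoc, ← exp_add]; ring_nf; simp
      _ ≤ exp (K * (s - t)) * f t := mul_le_mul_of_nonneg_left h (exp_pos _).le

theorem div_one_add_le_mul_div_one_add {x y L : ℝ} (hx : 0 ≤ x) (hy : 0 ≤ y) (hL : 1 ≤ L)
    (hxy : x ≤ L * y) : x / (1 + x) ≤ L * (y / (1 + y)) := by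
  rw [mul_div_assoc', div_le_div_iff₀ (by positivity) (by positivity)]
  nlinarith [mul_nonneg (sub_nonneg.mpr hL) (mul_nonneg hx hy)]

theorem sqrt_div_one_add_le_exp_mul {x y u : ℝ} (hx : 0 ≤ x) (hy : 0 ≤ y) (hu : 0 ≤ u)
    (hxy : x ≤ exp (2 * u) * y) :
    √(x / (1 + x)) ≤ exp u * √(y / (1 + y)) := by
  have h := sqrt_le_sqrt (div_one_add_le_mul_div_one_add hx hy (one_le_exp (by positivity)) hxy)
  rwa [sqrt_mul (exp_pos _).le, ← exp_half, mul_div_cancel_left₀ u two_ne_zero] at h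

/-- Abstract velocity lemma.  If `a : ℝ → ℝ` is differentiable with
`a(s) ≥ 0` and `|a'(s)| ≤ K·a(s)` for all `s` (where `K ≥ 0`), then the normalized weight
`ã(s) = √(a(s)/(1 + a(s)))` satisfies, for all `s, t`,
`e^{−(K/2)|t−s|}·ã(t) ≤ ã(s) ≤ e^{(K/2)|t−s|}·ã(t)`. -/
theorem velocity_lemma_abstract
    (K : ℝ) (hK : 0 ≤ K) (a : ℝ → ℝ) (ha : Differentiable ℝ a)
    (hpos : ∀ s, 0 ≤ a s) (hder : ∀ s, |deriv a s| ≤ K * a s) :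
    ∀ s t : ℝ,
      Real.exp (-(K / 2) * |t - s|) * Real.sqrt (a t / (1 + a t)) ≤
          Real.sqrt (a s / (1 + a s)) ∧
        Real.sqrt (a s / (1 + a s)) ≤
          Real.exp (K / 2 * |t - s|) * Real.sqrt (a t / (1 + a t)) := by
  have hbound : ∀ s t, √(a s / (1 + a s)) ≤ exp (K / 2 * |t - s|) * √(a t / (1 + a t)) := by
    intro s t
    refine sqrt_div_one_add_le_exp_mul (hpos s) (hpos t) (by positivity) ?_
    rw [abs_sub_comm, show 2 * (K / 2 * |s - t|) = K * |s - t| by ring]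
    exact le_exp_mul_abs_sub_mul_of_abs_deriv_le (fun x => (ha x).hasDerivAt) hder s t
  intro s t
  refine ⟨?_, hbound s t⟩
  calc exp (-(K / 2) * |t - s|) * √(a t / (1 + a t))
      ≤ exp (-(K / 2) * |t - s|) * (exp (K / 2 * |s - t|) * √(a s / (1 + a s))) :=
        mul_le_mul_of_nonneg_left (hbound t s) (exp_pos _).le
    _ = √(a s / (1 + a s)) := by
        rw [abs_sub_comm, ← mul_assoc, ← exp_add]; ring_nf; simp
end
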